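/- (Eigenvector correspondence between the two spectral problems) Let ζ ∈ ℂ with ζ ≠ 0. (1) If w ∈ ℂ^{2N}, w ≠ 0, and A(β)w = ζw, then there exists q ∈ ℂ^N with q ≠ 0, C(ζ,β)q = 0, and w = (−iζ·√α·q, √η·q) (block form). (2) Conversely, if q ∈ ℂ^N, q ≠ 0, and C(ζ,β)q = 0, then the vector w = (−iζ·√α·q, √η·q) is nonzero and satisfies A(β)w = ζw. -/

import Mathlib

open Matrix
open scoped ComplexOrder

noncomputable section

variable {N : ℕ}

/-- A real matrix viewed as a complex matrix. -/
def cm (M : Matrix (Fin N) (Fin N) ℝ) : Matrix (Fin N) (Fin N) ℂ :=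
  M.map Complex.ofReal

/-- The quadratic matrix pencil `C(ζ,β) = ζ²α + iζ(2θ + βR) − η`. -/
def pencil (α η θ R : Matrix (Fin N) (Fin N) ℝ) (β : ℝ) (ζ : ℂ) :
    Matrix (Fin N) (Fin N) ℂ :=
  ζ ^ 2 • cm α + (Complex.I * ζ) • ((2 : ℂ) • cm θ + (β : ℂ) • cm R) - cm η

/-- The positive semidefinite square root, as `Matrix.PosSemidef.sqrt` was defined in Mathlib
(Dec 2024); that declaration no longer exists. -/
def psdSqrt {n : Type*} [Fintype n] [DecidableEq n] {A : Matrix n n ℂ} (hA : A.PosSemidef) :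
    Matrix n n ℂ :=
  hA.1.eigenvectorUnitary.1 * diagonal ((↑) ∘ (√·) ∘ hA.1.eigenvalues) *
    (star hA.1.eigenvectorUnitary : Matrix n n ℂ)

/-- `K_p = (√α)⁻¹`. -/
def Kp {α : Matrix (Fin N) (Fin N) ℝ} (hα : (cm α).PosDef) : Matrix (Fin N) (Fin N) ℂ :=
  (psdSqrt hα.posSemidef)⁻¹

/-- `Φ = √η · K_p`. -/
def Phi {α η : Matrix (Fin N) (Fin N) ℝ} (hα : (cm α).PosDef) (hη : (cm η).PosSemidef) :
    Matrix (Fin N) (Fin N) ℂ :=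
  psdSqrt hη * Kp hα

/-- `R̃ = K_p R K_p`. -/
def Rt (R : Matrix (Fin N) (Fin N) ℝ) {α : Matrix (Fin N) (Fin N) ℝ} (hα : (cm α).PosDef) :
    Matrix (Fin N) (Fin N) ℂ :=
  Kp hα * cm R * Kp hα

/-- `Ω_p = −2i K_p θ K_p`. -/
def Omp (θ : Matrix (Fin N) (Fin N) ℝ) {α : Matrix (Fin N) (Fin N) ℝ} (hα : (cm α).PosDef) :
    Matrix (Fin N) (Fin N) ℂ :=
  ((-2 : ℂ) * Complex.I) • (Kp hα * cm θ * Kp hα)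

/-- `Ω = [[Ω_p, −iΦᵀ],[iΦ, 0]]`. -/
def Om (θ : Matrix (Fin N) (Fin N) ℝ) {α η : Matrix (Fin N) (Fin N) ℝ}
    (hα : (cm α).PosDef) (hη : (cm η).PosSemidef) :
    Matrix (Fin N ⊕ Fin N) (Fin N ⊕ Fin N) ℂ :=
  fromBlocks (Omp θ hα) ((-Complex.I) • (Phi hα hη)ᵀ) (Complex.I • Phi hα hη) 0

/-- `B = [[R̃, 0],[0, 0]]`. -/
def Bm (R : Matrix (Fin N) (Fin N) ℝ) {α : Matrix (Fin N) (Fin N) ℝ} (hα : (cm α).PosDef) :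
    Matrix (Fin N ⊕ Fin N) (Fin N ⊕ Fin N) ℂ :=
  fromBlocks (Rt R hα) 0 0 0

/-- The system operator `A(β) = Ω − iβB`. -/
def Asys (θ R : Matrix (Fin N) (Fin N) ℝ) {α η : Matrix (Fin N) (Fin N) ℝ}
    (hα : (cm α).PosDef) (hη : (cm η).PosSemidef) (β : ℝ) :
    Matrix (Fin N ⊕ Fin N) (Fin N ⊕ Fin N) ℂ :=
  Om θ hα hη - (Complex.I * (β : ℂ)) • Bm R hα

/-- The ℓ²→ℓ² operator norm of a complex matrix. -/
def opN {n : Type*} [Fintype n] [DecidableEq n] (M : Matrix n n ℂ) : ℝ :=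
  ‖Matrix.toEuclideanCLM (𝕜 := ℂ) M‖

/-- `ω_max = ‖Ω‖`. -/
def omegaMax (θ : Matrix (Fin N) (Fin N) ℝ) {α η : Matrix (Fin N) (Fin N) ℝ}
    (hα : (cm α).PosDef) (hη : (cm η).PosSemidef) : ℝ :=
  opN (Om θ hα hη)

/-- `b_min`, the smallest nonzero eigenvalue of `B`. -/
def bMin (R : Matrix (Fin N) (Fin N) ℝ) {α : Matrix (Fin N) (Fin N) ℝ} (hα : (cm α).PosDef) : ℝ :=
  sInf {r : ℝ | r ≠ 0 ∧ (r : ℂ) ∈ spectrum ℂ (Bm R hα)}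

/-!
Write `S = √α`, `K = S⁻¹` and `E = √η`. Since `α` and `η` are real symmetric, their square roots
are symmetric, so `Φᵀ = K E` and `A(β)` has blocks `[[Ω_p − iβR̃, −iKE], [iEK, 0]]`.
Multiplying out gives, for every `q`,
`A(β) (−iζ S q, E q) = ζ (−iζ S q, E q) + (i K C(ζ,β) q, 0)`,
so `(−iζ S q, E q)` is a `ζ`-eigenvector exactly when `C(ζ,β) q = 0`. Conversely, the second
block row `iΦφ = ζψ` of an eigenvalue equation `A(β)(φ, ψ) = ζ(φ, ψ)` shows that every such vector
has this form, with `q = iζ⁻¹ K φ`.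
-/

open Complex

section psdSqrt

variable {n : Type*} [Fintype n] [DecidableEq n] {A : Matrix n n ℂ} (hA : A.PosSemidef)

open scoped MatrixOrder

lemma psdSqrt_eq_cfcSqrt : psdSqrt hA = CFC.sqrt A := by
  rw [CFC.sqrt_eq_real_sqrt A hA.nonneg, cfcₙ_eq_cfc, hA.1.cfc_eq, IsHermitian.cfc,
    Unitary.conjStarAlgAut_apply]
  rfl

lemma psdSqrt_mul_self : psdSqrt hA * psdSqrt hA = A := by
  rw [psdSqrt_eq_cfcSqrt]
  exact CFC.sqrt_mul_sqrt_self A hA.nonneg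

lemma transpose_psdSqrt (hAt : Aᵀ = A) : (psdSqrt hA)ᵀ = psdSqrt hA := by
  rw [psdSqrt_eq_cfcSqrt]
  refine (CFC.sqrt_unique ?_ (CFC.sqrt_nonneg A).posSemidef.transpose.nonneg).symm
  rw [← transpose_mul, CFC.sqrt_mul_sqrt_self A hA.nonneg, hAt]

lemma isUnit_psdSqrt (hAu : IsUnit A) : IsUnit (psdSqrt hA) := by
  rwa [psdSqrt_eq_cfcSqrt, CFC.isUnit_sqrt_iff A hA.nonneg]

end psdSqrt

lemma transpose_cm_of_isHermitian {M : Matrix (Fin N) (Fin N) ℝ}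
    (hM : (cm M).IsHermitian) : (cm M)ᵀ = cm M := by
  conv_rhs => rw [← hM.eq]
  ext i j
  simp [cm]

section correspondence

variable {α η θ R : Matrix (Fin N) (Fin N) ℝ} (hα : (cm α).PosDef)
  (hη : (cm η).PosSemidef)

lemma Kp_mul_psdSqrt : Kp hα * psdSqrt hα.posSemidef = 1 :=
  nonsing_inv_mul _ <| (isUnit_iff_isUnit_det _).mp (isUnit_psdSqrt _ hα.isUnit)

lemma psdSqrt_mul_Kp : psdSqrt hα.posSemidef * Kp hα = 1 :=
  mul_nonsing_inv _ <| (isUnit_iff_isUnit_det _).mp (isUnit_psdSqrt _ hα.isUnit)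

lemma isUnit_Kp : IsUnit (Kp hα) :=
  isUnit_nonsing_inv_iff.mpr (isUnit_psdSqrt _ hα.isUnit)

lemma Kp_mul_cm : Kp hα * cm α = psdSqrt hα.posSemidef := by
  conv_lhs => rw [← psdSqrt_mul_self hα.posSemidef, ← Matrix.mul_assoc, Kp_mul_psdSqrt,
    Matrix.one_mul]

lemma transpose_Phi : (Phi hα hη)ᵀ = Kp hα * psdSqrt hη := by
  rw [Phi, transpose_mul, transpose_psdSqrt _ (transpose_cm_of_isHermitian hη.1), Kp,
    transpose_nonsing_inv, transpose_psdSqrt _ (transpose_cm_of_isHermitian hα.isHermitian)]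

lemma Asys_eq_fromBlocks (β : ℝ) :
    Asys θ R hα hη β = fromBlocks (Omp θ hα - (I * β) • Rt R hα)
      (-I • (Kp hα * psdSqrt hη)) (I • (psdSqrt hη * Kp hα)) 0 := by
  rw [Asys, Om, Bm, transpose_Phi, Phi]
  ext (i | i) (j | j) <;> simp

def eigenLift (ζ : ℂ) (q : Fin N → ℂ) : Fin N ⊕ Fin N → ℂ :=
  Sum.elim ((-I * ζ) • (psdSqrt hα.posSemidef *ᵥ q)) (psdSqrt hη *ᵥ q)

lemma Asys_mulVec_eigenLift (β : ℝ) (ζ : ℂ) (q : Fin N → ℂ) :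
    Asys θ R hα hη β *ᵥ eigenLift hα hη ζ q =
      ζ • eigenLift hα hη ζ q + Sum.elim (I • (Kp hα *ᵥ (pencil α η θ R β ζ *ᵥ q))) 0 := by
  rw [Asys_eq_fromBlocks, eigenLift, fromBlocks_mulVec, Omp, Rt]
  set S := psdSqrt hα.posSemidef
  set K := Kp hα
  set E := psdSqrt hη
  have hKS : K * S = 1 := Kp_mul_psdSqrt hα
  have hθ : K * cm θ * K * S = K * cm θ := by rw [Matrix.mul_assoc _ K, hKS, Matrix.mul_one]
  have hR : K * cm R * K * S = K * cm R := by rw [Matrix.mul_assoc _ K, hKS, Matrix.mul_one]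
  have hKE : K * E * E = K * cm η := by rw [Matrix.mul_assoc, psdSqrt_mul_self]
  have hKα : K * cm α = S := Kp_mul_cm hα
  have hEKS : E * K * S = E := by rw [Matrix.mul_assoc, hKS, Matrix.mul_one]
  have top : ((-2 * I) • (K * cm θ * K) - (I * β) • (K * cm R * K)) *ᵥ ((-I * ζ) • (S *ᵥ q))
      + (-I • (K * E)) *ᵥ (E *ᵥ q) = ζ • ((-I * ζ) • (S *ᵥ q))
        + I • (K *ᵥ (pencil α η θ R β ζ *ᵥ q)) := by
    simp only [pencil, sub_mulVec, add_mulVec, smul_mulVec, mulVec_smul, mulVec_add,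
      mulVec_sub, mulVec_mulVec, Matrix.smul_mul, Matrix.sub_mul, hθ, hR, hKE, hKα, smul_smul]
    match_scalars <;> ring
  have bottom : (I • (E * K)) *ᵥ ((-I * ζ) • (S *ᵥ q)) = ζ • (E *ᵥ q) := by
    simp only [smul_mulVec, mulVec_smul, mulVec_mulVec, Matrix.smul_mul, hEKS, smul_smul]
    match_scalars
    linear_combination (-ζ) * I_sq
  ext (i | i)
  · simpa using congrFun top i
  · simpa using congrFun bottom i

lemma eigenLift_eq_zero_iff {ζ : ℂ} (hζ : ζ ≠ 0) {q : Fin N → ℂ} :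
    eigenLift hα hη ζ q = 0 ↔ q = 0 := by
  refine ⟨fun h => ?_, fun h => by simp [h, eigenLift]⟩
  have hSq : (-I * ζ) • (psdSqrt hα.posSemidef *ᵥ q) = 0 := congrArg (· ∘ Sum.inl) h
  rw [smul_eq_zero, or_iff_right (by simp [hζ])] at hSq
  exact mulVec_injective_of_isUnit (isUnit_psdSqrt _ hα.isUnit) (hSq.trans (mulVec_zero _).symm)

lemma Asys_mulVec_eigenLift_eq_smul_iff (β : ℝ) (ζ : ℂ) (q : Fin N → ℂ) :
    Asys θ R hα hη β *ᵥ eigenLift hα hη ζ q = ζ • eigenLift hα hη ζ q ↔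
      pencil α η θ R β ζ *ᵥ q = 0 := by
  rw [Asys_mulVec_eigenLift, add_eq_left, ← Sum.elim_zero_zero, Sum.elim_eq_iff, smul_eq_zero,
    (mulVec_injective_of_isUnit (isUnit_Kp hα)).eq_iff' (mulVec_zero _)]
  simp

lemma exists_eq_eigenLift_of_mulVec_eq_smul (β : ℝ) {ζ : ℂ} (hζ : ζ ≠ 0)
    {w : Fin N ⊕ Fin N → ℂ} (hw : Asys θ R hα hη β *ᵥ w = ζ • w) :
    ∃ q, w = eigenLift hα hη ζ q := by
  obtain ⟨φ, ψ, rfl⟩ : ∃ φ ψ, w = Sum.elim φ ψ :=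
    ⟨w ∘ Sum.inl, w ∘ Sum.inr, (Sum.elim_comp_inl_inr w).symm⟩
  have hrow : I • ((psdSqrt hη * Kp hα) *ᵥ φ) = ζ • ψ := by
    funext i
    simpa [Asys_eq_fromBlocks, fromBlocks_mulVec, smul_mulVec] using congrFun hw (Sum.inr i)
  refine ⟨(I * ζ⁻¹) • (Kp hα *ᵥ φ), ?_⟩
  rw [eigenLift, mulVec_smul, mulVec_smul, mulVec_mulVec, mulVec_mulVec, psdSqrt_mul_Kp,
    one_mulVec, smul_smul]
  congr 1
  · rw [show -I * ζ * (I * ζ⁻¹) = 1 by linear_combination (-I ^ 2) * mul_inv_cancel₀ hζ - I_sq,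
      one_smul]
  · rw [mul_comm, ← smul_smul, hrow, smul_smul, inv_mul_cancel₀ hζ, one_smul]

end correspondence

theorem eigenvector_correspondence_general
    {N : ℕ}
    (α η θ R : Matrix (Fin N) (Fin N) ℝ)
    (hα : (cm α).PosDef) (hη : (cm η).PosSemidef)
    (β : ℝ)
    (ζ : ℂ) (hζ : ζ ≠ 0) :
    (∀ w : (Fin N ⊕ Fin N) → ℂ, w ≠ 0 → Asys θ R hα hη β *ᵥ w = ζ • w →
      ∃ q : Fin N → ℂ, q ≠ 0 ∧ pencil α η θ R β ζ *ᵥ q = 0 ∧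
        w = Sum.elim ((-Complex.I * ζ) • (psdSqrt hα.posSemidef *ᵥ q)) (psdSqrt hη *ᵥ q)) ∧
    (∀ q : Fin N → ℂ, q ≠ 0 → pencil α η θ R β ζ *ᵥ q = 0 →
      Sum.elim ((-Complex.I * ζ) • (psdSqrt hα.posSemidef *ᵥ q)) (psdSqrt hη *ᵥ q) ≠ 0 ∧
        Asys θ R hα hη β *ᵥ
            Sum.elim ((-Complex.I * ζ) • (psdSqrt hα.posSemidef *ᵥ q)) (psdSqrt hη *ᵥ q) =
          ζ • Sum.elim ((-Complex.I * ζ) • (psdSqrt hα.posSemidef *ᵥ q)) (psdSqrt hη *ᵥ q)) := by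
  refine ⟨fun w hw0 hw => ?_, fun q hq0 hq => ⟨(eigenLift_eq_zero_iff hα hη hζ).not.mpr hq0,
    (Asys_mulVec_eigenLift_eq_smul_iff hα hη β ζ q).mpr hq⟩⟩
  obtain ⟨q, rfl⟩ := exists_eq_eigenLift_of_mulVec_eq_smul hα hη β hζ hw
  exact ⟨q, (eigenLift_eq_zero_iff hα hη hζ).not.mp hw0,
    (Asys_mulVec_eigenLift_eq_smul_iff hα hη β ζ q).mp hw, rfl⟩

/-- **Eigenvector correspondence between the two spectral problems.** For `ζ ≠ 0`:
(1) any eigenvector `w` of `A(β)` with eigenvalue `ζ` has the form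
`w = (−iζ√α q, √η q)` with `C(ζ,β)q = 0`, `q ≠ 0`; (2) conversely any nonzero `q` with
`C(ζ,β)q = 0` produces such a nonzero eigenvector. -/
theorem eigenvector_correspondence
    {N : ℕ} (hN : 1 ≤ N)
    (α η θ R : Matrix (Fin N) (Fin N) ℝ)
    (hα : (cm α).PosDef) (hη : (cm η).PosSemidef)
    (hθ : θᵀ = -θ) (hR : (cm R).PosSemidef)
    (β : ℝ) (hβ : 0 ≤ β)
    (ζ : ℂ) (hζ : ζ ≠ 0) :
    (∀ w : (Fin N ⊕ Fin N) → ℂ, w ≠ 0 → Asys θ R hα hη β *ᵥ w = ζ • w →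
      ∃ q : Fin N → ℂ, q ≠ 0 ∧ pencil α η θ R β ζ *ᵥ q = 0 ∧
        w = Sum.elim ((-Complex.I * ζ) • (psdSqrt hα.posSemidef *ᵥ q)) (psdSqrt hη *ᵥ q)) ∧
    (∀ q : Fin N → ℂ, q ≠ 0 → pencil α η θ R β ζ *ᵥ q = 0 →
      Sum.elim ((-Complex.I * ζ) • (psdSqrt hα.posSemidef *ᵥ q)) (psdSqrt hη *ᵥ q) ≠ 0 ∧
        Asys θ R hα hη β *ᵥ
            Sum.elim ((-Complex.I * ζ) • (psdSqrt hα.posSemidef *ᵥ q)) (psdSqrt hη *ᵥ q) =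
          ζ • Sum.elim ((-Complex.I * ζ) • (psdSqrt hα.posSemidef *ᵥ q)) (psdSqrt hη *ᵥ q)) :=
  eigenvector_correspondence_general α η θ R hα hη β ζ hζ
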